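/- Quantitative Li lemma: let X be L-embedded with L-projection P : X'' → X, let Y ⊂ X be a closed subspace, and suppose η ≥ 0 is such that ‖y + z‖ ≥ (1−η)(‖y‖ + ‖z‖) for all y ∈ Y and all z in Y^{⊥⊥} with Pz ∈ Y-complement as in the decomposition Y^{⊥⊥} = Y ⊕ Z. Then ‖Pz‖ ≤ 3η^{1/2}‖z‖ for all z ∈ Z. -/

import Mathlib

namespace NormedSpace

/-- The topological dual of a normed space, as `NormedSpace.Dual` was defined in the older
Mathlib (removed since; `StrongDual` does not elaborate for the triple dual in `IsMEmbedded`). -/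
def Dual (𝕜 : Type*) [NontriviallyNormedField 𝕜] (E : Type*) [SeminormedAddCommGroup E]
    [NormedSpace 𝕜 E] : Type _ := E →L[𝕜] 𝕜

noncomputable instance (𝕜 : Type*) [NontriviallyNormedField 𝕜] (E : Type*)
    [SeminormedAddCommGroup E] [NormedSpace 𝕜 E] : SeminormedAddCommGroup (Dual 𝕜 E) :=
  ContinuousLinearMap.toSeminormedAddCommGroup

noncomputable instance (𝕜 : Type*) [NontriviallyNormedField 𝕜] (E : Type*)
    [SeminormedAddCommGroup E] [NormedSpace 𝕜 E] : NormedSpace 𝕜 (Dual 𝕜 E) :=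
  ContinuousLinearMap.toNormedSpace

instance (𝕜 : Type*) [NontriviallyNormedField 𝕜] (E : Type*)
    [SeminormedAddCommGroup E] [NormedSpace 𝕜 E] : FunLike (Dual 𝕜 E) E 𝕜 :=
  ContinuousLinearMap.funLike

end NormedSpace

open NormedSpace Filter Topology

/-- A sequence spans `ℓ¹` asymptotically isometrically. -/
def SpansL1Asymptotically {X : Type*} [NormedAddCommGroup X] [NormedSpace ℝ X]
    (x : ℕ → X) : Prop :=
  ∃ δ : ℕ → ℝ, (∀ n, 0 ≤ δ n ∧ δ n < 1) ∧ Tendsto δ atTop (nhds 0) ∧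
    ∀ (N : ℕ) (α : ℕ → ℝ),
      (∑ n ∈ Finset.range N, (1 - δ n) * |α n|) ≤ ‖∑ n ∈ Finset.range N, α n • x n‖ ∧
      ‖∑ n ∈ Finset.range N, α n • x n‖ ≤ ∑ n ∈ Finset.range N, |α n|

/-- A sequence spans `ℓ¹` almost isometrically. -/
def SpansL1AlmostIsometrically {X : Type*} [NormedAddCommGroup X] [NormedSpace ℝ X]
    (x : ℕ → X) : Prop :=
  ∃ δ : ℕ → ℝ, (∀ n, 0 ≤ δ n ∧ δ n < 1) ∧ Tendsto δ atTop (nhds 0) ∧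
    ∀ (m M : ℕ) (α : ℕ → ℝ),
      (1 - δ m) * (∑ n ∈ Finset.Icc m M, |α n|) ≤ ‖∑ n ∈ Finset.Icc m M, α n • x n‖ ∧
      ‖∑ n ∈ Finset.Icc m M, α n • x n‖ ≤ ∑ n ∈ Finset.Icc m M, |α n|

/-- A sequence spans `c₀` asymptotically isometrically. -/
def SpansC0Asymptotically {X : Type*} [NormedAddCommGroup X] [NormedSpace ℝ X]
    (z : ℕ → X) : Prop :=
  ∃ δ : ℕ → ℝ, (∀ n, 0 ≤ δ n ∧ δ n < 1) ∧ Tendsto δ atTop (nhds 0) ∧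
    ∀ (N : ℕ) (hN : N ≠ 0) (α : ℕ → ℝ),
      ((Finset.range N).sup' (Finset.nonempty_range_iff.mpr hN)
          (fun n => (1 - δ n) * |α n|)) ≤ ‖∑ n ∈ Finset.range N, α n • z n‖ ∧
      ‖∑ n ∈ Finset.range N, α n • z n‖ ≤
        (Finset.range N).sup' (Finset.nonempty_range_iff.mpr hN)
          (fun n => (1 + δ n) * |α n|)

/-- `P` is an L-projection: an idempotent bounded operator with
`‖ξ‖ = ‖Pξ‖ + ‖ξ - Pξ‖` for all `ξ`. -/
def IsLProjection {E : Type*} [NormedAddCommGroup E] [NormedSpace ℝ E]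
    (P : E →L[ℝ] E) : Prop :=
  (∀ ξ, P (P ξ) = P ξ) ∧ ∀ ξ, ‖ξ‖ = ‖P ξ‖ + ‖ξ - P ξ‖

/-- `X` is L-embedded: the canonical image of `X` in its bidual is the range of an
L-projection. -/
def IsLEmbedded (X : Type*) [NormedAddCommGroup X] [NormedSpace ℝ X] : Prop :=
  ∃ P : StrongDual ℝ (StrongDual ℝ X) →L[ℝ] StrongDual ℝ (StrongDual ℝ X),
    (∀ ξ, P (P ξ) = P ξ) ∧ (∀ ξ, ‖ξ‖ = ‖P ξ‖ + ‖ξ - P ξ‖) ∧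
      Set.range P = Set.range (inclusionInDoubleDual ℝ X)

/-- `X` is M-embedded: the annihilator of `X` in `X'''` is the range of an
L-projection on `X'''`. -/
def IsMEmbedded (X : Type*) [NormedAddCommGroup X] [NormedSpace ℝ X] : Prop :=
  ∃ P : Dual ℝ (Dual ℝ (Dual ℝ X)) →L[ℝ] Dual ℝ (Dual ℝ (Dual ℝ X)),
    (∀ φ, P (P φ) = P φ) ∧ (∀ φ, ‖φ‖ = ‖P φ‖ + ‖φ - P φ‖) ∧
      Set.range P = {φ | ∀ x : X, φ (inclusionInDoubleDual ℝ X x) = 0}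

/-- `X` fails the fixed point property: there are a nonempty closed bounded convex set and
a contractive self-map without fixed point. -/
def FailsFPP (X : Type*) [NormedAddCommGroup X] [NormedSpace ℝ X] : Prop :=
  ∃ C : Set X, C.Nonempty ∧ IsClosed C ∧ Bornology.IsBounded C ∧ Convex ℝ C ∧
    ∃ f : X → X, Set.MapsTo f C C ∧
      (∀ x ∈ C, ∀ y ∈ C, x ≠ y → ‖f x - f y‖ < ‖x - y‖) ∧
      ∀ x ∈ C, f x ≠ x

/-!
Write `P z = ι x`. Since `z = ι x + (z - P z)` is an L-decomposition, the estimate applied to `y`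
and `l • z` becomes `(1 - η)‖y‖ + |l| c ≤ ‖y + l x‖` with `c = ‖P z‖ - η‖z‖`. If `c > 0`, this
is exactly what Hahn–Banach needs to extend `(1 - η) f|_Y`, for any `‖f‖ ≤ 1`, to some `‖g‖ ≤ 1`
with `g x = -c`. As `z` annihilates `Y^⊥`,
`(1 - η) z f = z g = -c + (z - P z) g ≤ -c + ‖z‖ - ‖P z‖`, and the supremum over `f` forces
`c ≤ 0`. Hence `‖P z‖ ≤ min η 1 ‖z‖ ≤ √η ‖z‖`.
-/

section Extension

variable {𝕜 E : Type*} [RCLike 𝕜] [NormedAddCommGroup E] [NormedSpace 𝕜 E]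

theorem exists_extension_of_norm_add_smul_le (Y : Submodule 𝕜 E) {x : E} (hx : x ∉ Y)
    (ψ : Y →ₗ[𝕜] 𝕜) (a : 𝕜) (h : ∀ (y : Y) (l : 𝕜), ‖ψ y + l * a‖ ≤ ‖(y : E) + l • x‖) :
    ∃ g : StrongDual 𝕜 E, ‖g‖ ≤ 1 ∧ (∀ y : Y, g y = ψ y) ∧ g x = a := by
  let Φ := LinearPMap.supSpanSingleton ⟨Y, ψ⟩ x a hx
  have hΦ : ∀ w, ‖Φ.toFun w‖ ≤ 1 * ‖w‖ := by
    rintro ⟨w, hw⟩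
    obtain ⟨y, hy, v, hv, rfl⟩ := Submodule.mem_sup.mp hw
    obtain ⟨l, rfl⟩ := Submodule.mem_span_singleton.mp hv
    show ‖Φ ⟨y + l • x, hw⟩‖ ≤ 1 * ‖y + l • x‖
    rw [one_mul, LinearPMap.supSpanSingleton_apply_mk ⟨Y, ψ⟩ x a hx y hy l]
    exact h ⟨y, hy⟩ l
  obtain ⟨g, hg, hg_norm⟩ := exists_extension_norm_eq Φ.domain (Φ.toFun.mkContinuous 1 hΦ)
  refine ⟨g, hg_norm ▸ LinearMap.mkContinuous_norm_le _ zero_le_one _, fun y => ?_, ?_⟩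
  · exact (hg ⟨y, Submodule.mem_sup_left y.2⟩).trans
      (LinearPMap.supSpanSingleton_apply_mk_of_mem ⟨Y, ψ⟩ a hx y.2)
  · exact (hg _).trans (LinearPMap.supSpanSingleton_apply_self ⟨Y, ψ⟩ a hx)

end Extension

theorem ContinuousLinearMap.norm_le_of_forall_apply_le {E : Type*} [NormedAddCommGroup E]
    [NormedSpace ℝ E] {φ : StrongDual ℝ E} {K : ℝ} (h : ∀ f, ‖f‖ ≤ 1 → φ f ≤ K) : ‖φ‖ ≤ K := by
  have hK : 0 ≤ K := by simpa using h 0 (by simp)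
  refine φ.opNorm_le_of_unit_norm hK fun f hf => abs_le.2 ⟨?_, h f hf.le⟩
  have := h (-f) (by rw [norm_neg, hf])
  linarith [map_neg φ f]

theorem Real.le_sqrt_mul_of_le_mul_of_le {a b η : ℝ} (ha : 0 ≤ a) (haη : a ≤ η * b)
    (hab : a ≤ b) : a ≤ √η * b := by
  have hb : 0 ≤ b := ha.trans hab
  rw [← Real.sqrt_sq hb, ← Real.sqrt_mul' η (sq_nonneg b)]
  exact Real.le_sqrt_of_sq_le (by nlinarith)

namespace IsLProjection

variable {E : Type*} [NormedAddCommGroup E] [NormedSpace ℝ E] {P : E →L[ℝ] E}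

theorem norm_apply_le (hP : IsLProjection P) (ξ : E) : ‖P ξ‖ ≤ ‖ξ‖ := by
  linarith [hP.2 ξ, norm_nonneg (ξ - P ξ)]

theorem norm_sub_apply (hP : IsLProjection P) (ξ : E) : ‖ξ - P ξ‖ = ‖ξ‖ - ‖P ξ‖ := by
  linarith [hP.2 ξ]

theorem norm_add_smul_sub_apply (hP : IsLProjection P) {w : E} (hw : P w = w) (ξ : E) (l : ℝ) :
    ‖w + l • (ξ - P ξ)‖ = ‖w‖ + |l| * (‖ξ‖ - ‖P ξ‖) := by
  have hPξ : P (l • (ξ - P ξ)) = 0 := by rw [map_smul, map_sub, hP.1, sub_self, smul_zero]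
  have h := hP.2 (w + l • (ξ - P ξ))
  rwa [map_add, hw, hPξ, add_zero, add_sub_cancel_left, norm_smul, Real.norm_eq_abs,
    hP.norm_sub_apply] at h

end IsLProjection

/-- `E →L[ℝ] ℝ`, with the topology of `E` taken from its norm. For `E = StrongDual ℝ X` the
type `StrongDual ℝ E` instead carries the strong topology, which agrees with the norm topology
only up to unfolding, so that instance search fails for it. -/
abbrev NormedDual (E : Type*) [NormedAddCommGroup E] [NormedSpace ℝ E] : Type _ := E →L[ℝ] ℝ

section LEmbedded

variable {X : Type*} [NormedAddCommGroup X] [NormedSpace ℝ X]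
  {P : NormedDual (StrongDual ℝ X) →L[ℝ] NormedDual (StrongDual ℝ X)}
  {Y : Submodule ℝ X} {η : ℝ} {z : NormedDual (StrongDual ℝ X)} {x : X}

local notation "ι" => inclusionInDoubleDual ℝ X

theorem IsLProjection.le_norm_add_smul (hP : IsLProjection P)
    (hrange : Set.range P = Set.range ι)
    (hest : ∀ y ∈ Y, ∀ l : ℝ, (1 - η) * (‖y‖ + ‖l • z‖) ≤ ‖ι y + l • z‖)
    (hx : P z = ι x) {y : X} (hy : y ∈ Y) (l : ℝ) :
    (1 - η) * ‖y‖ + |l| * (‖P z‖ - η * ‖z‖) ≤ ‖y + l • x‖ := by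
  have hfix : P (ι (y + l • x)) = ι (y + l • x) := by
    obtain ⟨ξ, hξ⟩ : ι (y + l • x) ∈ Set.range P := hrange ▸ ⟨_, rfl⟩
    rw [← hξ, hP.1]
  have hsplit : ι y + l • z = ι (y + l • x) + l • (z - P z) := by
    rw [map_add, map_smul, ← hx, smul_sub]
    abel
  have hι : ‖ι (y + l • x)‖ = ‖y + l • x‖ := (inclusionInDoubleDualLi ℝ).norm_map _
  have h := hest y hy l
  rw [hsplit, hP.norm_add_smul_sub_apply hfix, norm_smul, Real.norm_eq_abs, hι] at h
  linarith

theorem IsLProjection.mul_apply_le (hP : IsLProjection P)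
    (hrange : Set.range P = Set.range ι)
    (hest : ∀ y ∈ Y, ∀ l : ℝ, (1 - η) * (‖y‖ + ‖l • z‖) ≤ ‖ι y + l • z‖)
    (hz : ∀ f : StrongDual ℝ X, (∀ y ∈ Y, f y = 0) → z f = 0)
    (hη : η ≤ 1) (hPz : η * ‖z‖ < ‖P z‖) (hx : P z = ι x) {f : StrongDual ℝ X}
    (hf : ‖f‖ ≤ 1) :
    (1 - η) * z f ≤ (1 + η) * ‖z‖ - 2 * ‖P z‖ := by
  set c := ‖P z‖ - η * ‖z‖
  have hc : 0 < c := sub_pos.2 hPz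
  have hlower := fun {y} => hP.le_norm_add_smul hrange hest hx (y := y)
  have hxY : x ∉ Y := fun hxY => by
    have h := hlower (Y.neg_mem hxY) 1
    rw [one_smul, neg_add_cancel, norm_zero, norm_neg, abs_one, one_mul] at h
    nlinarith [norm_nonneg x]
  obtain ⟨g, hg, hgY, hgx⟩ := exists_extension_of_norm_add_smul_le Y hxY
    ((1 - η) • (f : X →ₗ[ℝ] ℝ).comp Y.subtype) (-c) fun y l => by
      have hfy : |f y| ≤ ‖(y : X)‖ :=
        (f.le_opNorm y).trans (mul_le_of_le_one_left (norm_nonneg _) hf)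
      calc ‖(1 - η) * f y + l * -c‖ ≤ (1 - η) * |f y| + |l| * c := by
            simpa [abs_mul, abs_of_nonneg (sub_nonneg.2 hη), abs_of_pos hc] using
              abs_add_le ((1 - η) * f y) (l * -c)
        _ ≤ (1 - η) * ‖(y : X)‖ + |l| * c := by gcongr
        _ ≤ ‖(y : X) + l • x‖ := hlower y.2 l
  have hzg : z g = (1 - η) * z f := by
    have h := hz (g - (1 - η) • f) fun y hy => by simpa [sub_eq_zero] using hgY ⟨y, hy⟩
    simpa [sub_eq_zero] using h
  have hzg_le : z g ≤ -c + (‖z‖ - ‖P z‖) :=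
    calc z g = g x + (z - P z) g := by rw [← dual_def ℝ X x g, ← hx]; simp
      _ ≤ -c + (‖z‖ - ‖P z‖) := by
        rw [hgx, ← hP.norm_sub_apply]
        gcongr
        exact (le_abs_self _).trans
          (((z - P z).le_opNorm g).trans (mul_le_of_le_one_right (norm_nonneg _) hg))
  linarith

theorem IsLProjection.norm_apply_le_mul_norm (hP : IsLProjection P)
    (hrange : Set.range P = Set.range ι)
    (hest : ∀ y ∈ Y, ∀ l : ℝ, (1 - η) * (‖y‖ + ‖l • z‖) ≤ ‖ι y + l • z‖)
    (hz : ∀ f : StrongDual ℝ X, (∀ y ∈ Y, f y = 0) → z f = 0) :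
    ‖P z‖ ≤ η * ‖z‖ := by
  rcases le_or_gt 1 η with hη | hη
  · nlinarith [hP.norm_apply_le z, norm_nonneg z]
  by_contra! hPz
  obtain ⟨x, hx⟩ : P z ∈ Set.range ι := hrange ▸ ⟨z, rfl⟩
  have h := ContinuousLinearMap.norm_le_of_forall_apply_le (φ := (1 - η) • z)
    fun f hf => hP.mul_apply_le hrange hest hz hη.le hPz hx.symm hf
  rw [norm_smul, Real.norm_eq_abs, abs_of_pos (sub_pos.2 hη)] at h
  linarith

end LEmbedded

theorem stmt19_general {X : Type*} [NormedAddCommGroup X] [NormedSpace ℝ X]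
    (P : StrongDual ℝ (StrongDual ℝ X) →L[ℝ] StrongDual ℝ (StrongDual ℝ X))
    (hP : (∀ ξ, P (P ξ) = P ξ) ∧ ∀ ξ, ‖ξ‖ = ‖P ξ‖ + ‖ξ - P ξ‖)
    (hrange : Set.range P = Set.range (inclusionInDoubleDual ℝ X))
    (Y : Submodule ℝ X)
    (Z : Submodule ℝ (StrongDual ℝ (StrongDual ℝ X)))
    (η : ℝ)
    (hZsub : ∀ z ∈ Z, ∀ f : StrongDual ℝ X, (∀ y ∈ Y, f y = 0) → z f = 0)
    (hest : ∀ y ∈ Y, ∀ z ∈ Z,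
      (1 - η) * (‖y‖ + ‖z‖) ≤ ‖inclusionInDoubleDual ℝ X y + z‖) :
    ∀ z ∈ Z, ‖P z‖ ≤ 3 * Real.sqrt η * ‖z‖ := by
  intro z hz
  have hP' : IsLProjection (E := NormedDual (StrongDual ℝ X)) P := hP
  have hPz : ‖P z‖ ≤ √η * ‖z‖ :=
    Real.le_sqrt_mul_of_le_mul_of_le (norm_nonneg (P z : NormedDual (StrongDual ℝ X)))
      (hP'.norm_apply_le_mul_norm hrange (fun y hy l => hest y hy (l • z) (Z.smul_mem l hz))
        (hZsub z hz))
      (hP'.norm_apply_le z)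
  nlinarith [Real.sqrt_nonneg η, norm_nonneg z]

theorem stmt19 {X : Type*} [NormedAddCommGroup X] [NormedSpace ℝ X] [CompleteSpace X]
    (P : StrongDual ℝ (StrongDual ℝ X) →L[ℝ] StrongDual ℝ (StrongDual ℝ X))
    (hP : (∀ ξ, P (P ξ) = P ξ) ∧ ∀ ξ, ‖ξ‖ = ‖P ξ‖ + ‖ξ - P ξ‖)
    (hrange : Set.range P = Set.range (inclusionInDoubleDual ℝ X))
    (Y : Submodule ℝ X) (hYc : IsClosed (Y : Set X))
    (Z : Submodule ℝ (StrongDual ℝ (StrongDual ℝ X))) (hZc : IsClosed (Z : Set (StrongDual ℝ (StrongDual ℝ X))))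
    (η : ℝ) (hη : 0 ≤ η)
    (hZsub : ∀ z ∈ Z, ∀ f : StrongDual ℝ X, (∀ y ∈ Y, f y = 0) → z f = 0)
    (hdecomp : ∀ ξ : StrongDual ℝ (StrongDual ℝ X),
      (∀ f : StrongDual ℝ X, (∀ y ∈ Y, f y = 0) → ξ f = 0) →
      ∃ y ∈ Y, ∃ z ∈ Z, ξ = inclusionInDoubleDual ℝ X y + z)
    (hest : ∀ y ∈ Y, ∀ z ∈ Z,
      (1 - η) * (‖y‖ + ‖z‖) ≤ ‖inclusionInDoubleDual ℝ X y + z‖) :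
    ∀ z ∈ Z, ‖P z‖ ≤ 3 * Real.sqrt η * ‖z‖ :=
  stmt19_general P hP hrange Y Z η hZsub hest
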